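/- Let r ≥ 1 and let F₁, …, F_r : ℂ → ℂˣ satisfy F_j(s) = F_{j−1}(s)·F_j(s+1) for all s ∈ ℂ and 2 ≤ j ≤ r, and F₁(s+1) = −F₁(s) for all s ∈ ℂ. Let f ∈ ℤ[x,x⁻¹] be a Laurent polynomial with f(1) = f'(1) = ⋯ = f^{(r−1)}(1) = 0 (formal derivatives evaluated at x = 1). Then the function T_f F_r is constant with value 1 or −1. -/

import Mathlib

open LaurentPolynomial
open scoped LaurentPolynomial

/-- The coefficient of `x^k` in a Laurent polynomial `f = ∑ₖ a(k) xᵏ ∈ ℤ[x,x⁻¹]`. -/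
noncomputable def coeffZ (f : ℤ[T;T⁻¹]) (k : ℤ) : ℤ := f.coeff k

/-- The twisted function `(T_f F)(s) = ∏ₖ F(s−k)^{a(k)}` where `a` is the coefficient function
of the Laurent polynomial `f`. -/
noncomputable def Tw (f : ℤ[T;T⁻¹]) (F : ℂ → ℂˣ) (s : ℂ) : ℂˣ :=
  ∏ᶠ k : ℤ, F (s - (k : ℂ)) ^ coeffZ f k

/-- The formal derivative of a Laurent polynomial:
`(∑ₖ a(k) xᵏ)' = ∑ₖ k·a(k) x^{k−1}`. -/
noncomputable def lderiv (f : ℤ[T;T⁻¹]) : ℤ[T;T⁻¹] :=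
  Finsupp.sum (f.coeff : ℤ →₀ ℤ) fun k c => LaurentPolynomial.C (k * c) * T (k - 1)

/-- The value `f(1) = ∑ₖ a(k)` of a Laurent polynomial `f = ∑ₖ a(k) xᵏ` at `x = 1`,
i.e. the sum of its coefficients. -/
noncomputable def evalOne (f : ℤ[T;T⁻¹]) : ℤ := ∑ᶠ k : ℤ, coeffZ f k

/-! By the Leibniz rule `((x-1)g)^{(j+1)}(1) = (j+1) g^{(j)}(1)`, so the vanishing of
`f(1), …, f^{(r-1)}(1)` gives `f = (x-1)^r g`. Since multiplying by `x` shifts the argument of the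
twist by one, `T_{(x-1)g} F (s) = T_g (t ↦ F(t) / F(t+1)) (s-1)`. The ladder relations say that
`t ↦ F_j(t) / F_j(t+1)` is `F_{j-1}`, and `F_1(t) / F_1(t+1) = -1`; hence
`T_f F_r = T_g (-1) = (-1)^{g(1)}`. -/

theorem evalOne_eq_eval₂ (f : ℤ[T;T⁻¹]) : evalOne f = eval₂ (RingHom.id ℤ) 1 f := by
  have hsupp : Function.support (coeffZ f) ⊆ f.coeff.support := (Finsupp.fun_support_eq _).le
  rw [evalOne, finsum_eq_sum_of_support_subset _ hsupp]
  conv_rhs => rw [← AddMonoidAlgebra.sum_coeff_single f]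
  simp [Finsupp.sum, single_eq_C_mul_T, coeffZ]

theorem evalOne_T_one_sub_one_mul (g : ℤ[T;T⁻¹]) : evalOne ((T 1 - 1) * g) = 0 := by
  simp [evalOne_eq_eval₂]

theorem T_one_sub_one_dvd_of_evalOne_eq_zero {f : ℤ[T;T⁻¹]} (h : evalOne f = 0) :
    T 1 - 1 ∣ f := by
  obtain ⟨n, p, hp⟩ := f.exists_T_pow
  have hroot : p.IsRoot 1 := by
    have := congrArg (eval₂ (RingHom.id ℤ) 1) hp
    rwa [eval₂_toLaurent, map_mul, ← evalOne_eq_eval₂, h, zero_mul, Polynomial.eval₂_id] at this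
  obtain ⟨q, hq⟩ := Polynomial.dvd_iff_isRoot.mpr hroot
  refine ⟨Polynomial.toLaurent q * T (-n), ?_⟩
  calc f = Polynomial.toLaurent p * T (-n) := by rw [hp, mul_T_assoc]; simp
    _ = _ := by simp [hq, mul_assoc]

theorem lderiv_add (f g : ℤ[T;T⁻¹]) : lderiv (f + g) = lderiv f + lderiv g :=
  Finsupp.sum_add_index' (by simp) fun k a b => by rw [mul_add, map_add, add_mul]

theorem lderiv_zsmul (n : ℤ) (f : ℤ[T;T⁻¹]) : lderiv (n • f) = n • lderiv f :=
  map_zsmul (AddMonoidHom.mk' lderiv lderiv_add) n f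

theorem lderiv_C_mul_T (c n : ℤ) : lderiv (C c * T n) = C (n * c) * T (n - 1) := by
  rw [lderiv, ← single_eq_C_mul_T, AddMonoidAlgebra.coeff_single]
  exact Finsupp.sum_single_index (by simp)

theorem lderiv_mul (f g : ℤ[T;T⁻¹]) : lderiv (f * g) = lderiv f * g + f * lderiv g := by
  induction f using LaurentPolynomial.induction_on' with
  | add p q hp hq => rw [add_mul, lderiv_add, hp, hq, lderiv_add]; ring
  | C_mul_T m a =>
    induction g using LaurentPolynomial.induction_on' with
    | add p q hp hq => rw [mul_add, lderiv_add, hp, hq, lderiv_add]; ring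
    | C_mul_T n b =>
      have hmul : ∀ a b m n : ℤ, C a * T m * (C b * T n) = C (a * b) * T (m + n) := by
        intro a b m n
        rw [map_mul, T_add]
        ring
      rw [hmul, lderiv_C_mul_T, lderiv_C_mul_T, lderiv_C_mul_T, hmul, hmul,
        show m - 1 + n = m + n - 1 by ring, show m + (n - 1) = m + n - 1 by ring,
        ← add_mul, ← map_add]
      congr 2
      ring

theorem lderiv_T_one_sub_one : lderiv (T 1 - 1 : ℤ[T;T⁻¹]) = 1 := by
  have h := lderiv_add (C 1 * T 1 - C 1 * T 0) (C 1 * T 0)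
  rw [sub_add_cancel, lderiv_C_mul_T, lderiv_C_mul_T] at h
  simpa using h.symm

theorem lderiv_iterate_T_one_sub_one_mul (g : ℤ[T;T⁻¹]) (j : ℕ) :
    lderiv^[j + 1] ((T 1 - 1) * g)
      = (T 1 - 1) * lderiv^[j + 1] g + ((j : ℤ) + 1) • lderiv^[j] g := by
  induction j with
  | zero => simp [lderiv_mul, lderiv_T_one_sub_one, add_comm]
  | succ j ih =>
    rw [Function.iterate_succ_apply', ih, lderiv_add, lderiv_zsmul, lderiv_mul,
      lderiv_T_one_sub_one, ← Function.iterate_succ_apply' lderiv (j + 1),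
      ← Function.iterate_succ_apply' lderiv j, one_mul]
    simp only [Nat.succ_eq_add_one, Nat.cast_succ, add_smul, one_smul]
    abel

theorem T_one_sub_one_pow_dvd_of_evalOne_lderiv_iterate {r : ℕ} {f : ℤ[T;T⁻¹]}
    (h : ∀ j < r, evalOne (lderiv^[j] f) = 0) : (T 1 - 1) ^ r ∣ f := by
  induction r generalizing f with
  | zero => exact one_dvd f
  | succ r ih =>
    obtain ⟨g, rfl⟩ := T_one_sub_one_dvd_of_evalOne_eq_zero (h 0 r.succ_pos)
    have hg : ∀ j < r, evalOne (lderiv^[j] g) = 0 := fun j hj => by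
      have := h (j + 1) (by omega)
      rw [lderiv_iterate_T_one_sub_one_mul, evalOne_eq_eval₂, map_add, map_zsmul,
        ← evalOne_eq_eval₂, ← evalOne_eq_eval₂, evalOne_T_one_sub_one_mul, zero_add,
        smul_eq_mul] at this
      exact (mul_eq_zero.mp this).resolve_left (by omega)
    rw [pow_succ']
    exact mul_dvd_mul_left _ (ih hg)

section Twist

variable (f g : ℤ[T;T⁻¹]) (G H : ℂ → ℂˣ) (s : ℂ)

theorem hasFiniteMulSupport_zpow_coeffZ (u : ℤ → ℂˣ) :
    Function.HasFiniteMulSupport fun k => u k ^ coeffZ f k :=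
  f.coeff.hasFiniteSupport.subset fun k hk => by
    contrapose! hk
    simp_all [coeffZ]

theorem coeffZ_mul_T_one (k : ℤ) : coeffZ (f * T 1) k = coeffZ f (k - 1) := by
  rw [coeffZ, T, AddMonoidAlgebra.coeff_mul_single_apply, mul_one, ← sub_eq_add_neg, coeffZ]

theorem Tw_add : Tw (f + g) G s = Tw f G s * Tw g G s := by
  rw [Tw, Tw, Tw, ← finprod_mul_distrib (hasFiniteMulSupport_zpow_coeffZ f _)
    (hasFiniteMulSupport_zpow_coeffZ g _)]
  exact finprod_congr fun k => zpow_add _ _ _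

theorem Tw_neg : Tw (-f) G s = (Tw f G s)⁻¹ := by
  rw [Tw, Tw, ← finprod_inv_distrib]
  exact finprod_congr fun k => zpow_neg _ _

theorem Tw_sub : Tw (f - g) G s = Tw f G s * (Tw g G s)⁻¹ := by
  rw [sub_eq_add_neg, Tw_add, Tw_neg]

theorem Tw_mul_T_one : Tw (f * T 1) G s = Tw f G (s - 1) := by
  rw [Tw, Tw, ← finprod_comp_equiv (Equiv.addRight 1)]
  refine finprod_congr fun k => ?_
  rw [Equiv.coe_addRight, coeffZ_mul_T_one, add_sub_cancel_right, Int.cast_add, Int.cast_one,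
    sub_add_eq_sub_sub_swap]

theorem Tw_comp_add_one : Tw f (fun t => G (t + 1)) (s - 1) = Tw f G s := by
  simp only [Tw, sub_add_eq_add_sub, add_sub_cancel_right]

theorem Tw_mul_fun : Tw f (fun t => G t * H t) s = Tw f G s * Tw f H s := by
  simp only [Tw, ← finprod_mul_distrib (hasFiniteMulSupport_zpow_coeffZ f _)
    (hasFiniteMulSupport_zpow_coeffZ f _), mul_zpow]

theorem Tw_inv_fun : Tw f (fun t => (G t)⁻¹) s = (Tw f G s)⁻¹ := by
  simp only [Tw, ← finprod_inv_distrib, inv_zpow]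

theorem Tw_const (u : ℂˣ) : Tw f (fun _ => u) s = u ^ evalOne f := by
  have hsupp : Function.support (coeffZ f) ⊆ f.coeff.support := (Finsupp.fun_support_eq _).le
  rw [Tw, evalOne, finsum_eq_sum_of_support_subset _ hsupp,
    finprod_eq_prod_of_mulSupport_subset _ fun k hk => hsupp fun h => hk (by simp [h])]
  induction f.coeff.support using Finset.cons_induction <;> simp_all [zpow_add]

theorem Tw_T_one_sub_one_mul :
    Tw ((T 1 - 1) * f) G s = Tw f (fun t => G t * (G (t + 1))⁻¹) (s - 1) := by
  rw [sub_one_mul, T_mul, Tw_sub, Tw_mul_T_one, Tw_mul_fun, Tw_inv_fun, Tw_comp_add_one]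

end Twist

theorem Tw_T_one_sub_one_pow_mul_of_ladder {r : ℕ} {F : ℕ → ℂ → ℂˣ}
    (hlad : ∀ j : ℕ, 2 ≤ j → j ≤ r → ∀ s : ℂ, F j s = F (j - 1) s * F j (s + 1))
    (hF1 : ∀ s : ℂ, F 1 (s + 1) = -F 1 s) {j : ℕ} (hj : 1 ≤ j) (hjr : j ≤ r)
    (g : ℤ[T;T⁻¹]) (s : ℂ) : Tw ((T 1 - 1) ^ j * g) (F j) s = (-1) ^ evalOne g := by
  induction j, hj using Nat.le_induction generalizing s with
  | base =>
    have hquot : (fun t => F 1 t * (F 1 (t + 1))⁻¹) = fun _ => -1 := by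
      funext t
      rw [hF1, mul_inv_eq_iff_eq_mul, neg_one_mul, neg_neg]
    rw [pow_one, Tw_T_one_sub_one_mul, hquot, Tw_const]
  | succ j hj ih =>
    have hquot : (fun t => F (j + 1) t * (F (j + 1) (t + 1))⁻¹) = F j := by
      funext t
      rw [mul_inv_eq_iff_eq_mul, hlad (j + 1) (by omega) hjr, Nat.add_sub_cancel]
    rw [pow_succ', mul_assoc, Tw_T_one_sub_one_mul, hquot, ih (by omega)]

/-- Let `r ≥ 1` and let `F₁, …, F_r : ℂ → ℂˣ` satisfy `F_j(s) = F_{j−1}(s)·F_j(s+1)` for all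
`s ∈ ℂ` and `2 ≤ j ≤ r`, and `F₁(s+1) = −F₁(s)` for all `s ∈ ℂ`. Let `f ∈ ℤ[x,x⁻¹]` be a
Laurent polynomial with `f(1) = f'(1) = ⋯ = f^{(r−1)}(1) = 0` (formal derivatives evaluated
at `x = 1`). Then the function `T_f F_r` is constant with value `1` or `−1`. -/
theorem stmt8 (r : ℕ) (hr : 1 ≤ r) (F : ℕ → ℂ → ℂˣ)
    (hlad : ∀ j : ℕ, 2 ≤ j → j ≤ r → ∀ s : ℂ, F j s = F (j - 1) s * F j (s + 1))
    (hF1 : ∀ s : ℂ, F 1 (s + 1) = -F 1 s)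
    (f : ℤ[T;T⁻¹]) (hder : ∀ j : ℕ, j < r → evalOne (lderiv^[j] f) = 0) :
    ∃ u : ℂˣ, (u = 1 ∨ u = -1) ∧ ∀ s : ℂ, Tw f (F r) s = u := by
  obtain ⟨g, rfl⟩ := T_one_sub_one_pow_dvd_of_evalOne_lderiv_iterate hder
  refine ⟨(-1) ^ evalOne g, ?_, Tw_T_one_sub_one_pow_mul_of_ladder hlad hF1 hr le_rfl g⟩
  rcases (evalOne g).even_or_odd with h | h
  exacts [Or.inl h.neg_one_zpow, Or.inr h.neg_one_zpow]
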